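/- Let h be a Hermitian positive definite 2N×2N matrix and τ_z = diag(I_N, −I_N). Then D = τ_z h is diagonalizable with real nonzero eigenvalues. Moreover, every eigenvector of D with positive eigenvalue has positive symplectic norm and every eigenvector with negative eigenvalue has negative symplectic norm. -/

import Mathlib

/-!
With `S = √h`, `D = τ_z h` is similar via `S` to the Hermitian matrix `S τ_z S`, which is invertible,
so `D` is diagonalizable with real nonzero eigenvalues. If `D w = λ w`, then `h w = λ τ_z w`
because `τ_z² = 1`, hence `0 < w† h w = λ (w† τ_z w)`, which forces `w† τ_z w` to be real and of the
sign of `λ`.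
-/

open Matrix ComplexOrder

namespace Matrix

section Grading

variable {m n α : Type*} [DecidableEq m] [DecidableEq n] [Ring α]

lemma fromBlocks_one_zero_zero_neg_one_mul_self [Fintype m] [Fintype n] :
    (fromBlocks 1 0 0 (-1) : Matrix (m ⊕ n) (m ⊕ n) α) * fromBlocks 1 0 0 (-1) = 1 := by
  simp [fromBlocks_multiply, fromBlocks_one]

lemma isHermitian_fromBlocks_one_zero_zero_neg_one [StarRing α] :
    (fromBlocks 1 0 0 (-1) : Matrix (m ⊕ n) (m ⊕ n) α).IsHermitian :=
  isHermitian_one.fromBlocks (by simp) isHermitian_one.neg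

end Grading

variable {𝕜 n : Type*} [RCLike 𝕜] [Fintype n] [DecidableEq n]

lemma IsHermitian.eigenvalues_ne_zero {A : Matrix n n 𝕜} (hA : A.IsHermitian)
    (hdet : IsUnit A.det) (i : n) : hA.eigenvalues i ≠ 0 := by
  rw [hA.det_eq_prod_eigenvalues] at hdet
  exact fun h0 ↦ hdet.ne_zero (Finset.prod_eq_zero (Finset.mem_univ i) (by simp [h0]))

lemma IsHermitian.exists_eq_mul_diagonal_mul_inv {A : Matrix n n 𝕜} (hA : A.IsHermitian)
    (hdet : IsUnit A.det) :
    ∃ (P : Matrix n n 𝕜) (d : n → ℝ), IsUnit P.det ∧ (∀ i, d i ≠ 0) ∧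
      A = P * diagonal (fun i ↦ (d i : 𝕜)) * P⁻¹ := by
  set U := hA.eigenvectorUnitary
  refine ⟨U, hA.eigenvalues, UnitaryGroup.det_isUnit U, hA.eigenvalues_ne_zero hdet, ?_⟩
  rw [inv_eq_left_inv (Unitary.coe_star_mul_self U)]
  exact hA.spectral_theorem

lemma PosDef.exists_isHermitian_mul_self_eq {A : Matrix n n 𝕜} (hA : A.PosDef) :
    ∃ S : Matrix n n 𝕜, S.IsHermitian ∧ IsUnit S.det ∧ S * S = A := by
  open scoped MatrixOrder in
  obtain ⟨S, hS, hSS⟩ : ∃ S : Matrix n n 𝕜, S.IsHermitian ∧ S * S = A :=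
    ⟨CFC.sqrt A, (CFC.sqrt_nonneg A).posSemidef.1, CFC.sqrt_mul_sqrt_self A hA.posSemidef.nonneg⟩
  refine ⟨S, hS, ?_, hSS⟩
  have hA : IsUnit (S * S).det := hSS ▸ hA.isUnit.map detMonoidHom
  exact isUnit_of_mul_isUnit_left (det_mul S S ▸ hA)

lemma exists_eq_mul_diagonal_mul_inv_of_isHermitian_of_posDef {τ A : Matrix n n 𝕜}
    (hτ : τ.IsHermitian) (hτdet : IsUnit τ.det) (hA : A.PosDef) :
    ∃ (P : Matrix n n 𝕜) (d : n → ℝ), IsUnit P.det ∧ (∀ i, d i ≠ 0) ∧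
      τ * A = P * diagonal (fun i ↦ (d i : 𝕜)) * P⁻¹ := by
  obtain ⟨S, hS, hSdet, rfl⟩ := hA.exists_isHermitian_mul_self_eq
  have hM : (S * τ * S).IsHermitian := by
    simp [IsHermitian, conjTranspose_mul, hS.eq, hτ.eq, mul_assoc]
  obtain ⟨P, d, hP, hd, hdiag⟩ := hM.exists_eq_mul_diagonal_mul_inv (by
    rw [det_mul, det_mul]; exact (hSdet.mul hτdet).mul hSdet)
  refine ⟨S⁻¹ * P, d, by rw [det_mul]; exact (isUnit_nonsing_inv_det S hSdet).mul hP, hd, ?_⟩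
  calc τ * (S * S) = S⁻¹ * (S * τ * S) * S := by
        simp [mul_assoc, ← mul_assoc S⁻¹ S, nonsing_inv_mul S hSdet]
    _ = S⁻¹ * P * diagonal (fun i ↦ (d i : 𝕜)) * (S⁻¹ * P)⁻¹ := by
        rw [hdiag, mul_inv_rev, nonsing_inv_nonsing_inv S hSdet]; simp only [mul_assoc]

lemma dotProduct_mulVec_eq_mul_of_mul_mulVec_eq_smul {R : Type*} [CommSemiring R] [StarRing R]
    {τ A : Matrix n n R} (hτ : τ * τ = 1) {c : R} {w : n → R} (hw : (τ * A) *ᵥ w = c • w) :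
    star w ⬝ᵥ A *ᵥ w = c * (star w ⬝ᵥ τ *ᵥ w) := by
  have hAw : A *ᵥ w = c • τ *ᵥ w := by
    rw [← mulVec_smul, ← hw, mulVec_mulVec, ← mul_assoc, hτ, one_mul]
  rw [hAw, dotProduct_smul, smul_eq_mul]

end Matrix

/-- A positive definite BdG matrix `h` yields a dynamically stable dynamical matrix
`D = τ_z h`: `D` is diagonalizable with real nonzero eigenvalues, and eigenvectors
with positive (negative) eigenvalue have positive (negative) symplectic norm. -/
theorem stmt17 (N : ℕ)
    (τz h : Matrix (Fin N ⊕ Fin N) (Fin N ⊕ Fin N) ℂ)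
    (hτz : τz = Matrix.fromBlocks 1 0 0 (-1))
    (hpos : h.PosDef) :
    (∃ (P : Matrix (Fin N ⊕ Fin N) (Fin N ⊕ Fin N) ℂ)
      (d : (Fin N ⊕ Fin N) → ℝ), IsUnit P.det ∧ (∀ i, d i ≠ 0) ∧
      τz * h = P * Matrix.diagonal (fun i => (d i : ℂ)) * P⁻¹) ∧
    (∀ (lam : ℝ) (w : (Fin N ⊕ Fin N) → ℂ), w ≠ 0 →
      (τz * h).mulVec w = (lam : ℂ) • w →
      (star w ⬝ᵥ τz.mulVec w).im = 0 ∧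
      (0 < lam → 0 < (star w ⬝ᵥ τz.mulVec w).re) ∧
      (lam < 0 → (star w ⬝ᵥ τz.mulVec w).re < 0)) := by
  have hτ2 : τz * τz = 1 := hτz ▸ fromBlocks_one_zero_zero_neg_one_mul_self
  have hτH : τz.IsHermitian := hτz ▸ isHermitian_fromBlocks_one_zero_zero_neg_one
  refine ⟨exists_eq_mul_diagonal_mul_inv_of_isHermitian_of_posDef hτH
    (isUnit_det_of_left_inverse hτ2) hpos, fun lam w hw hew ↦ ?_⟩
  have hsign : 0 < (lam : ℂ) * (star w ⬝ᵥ τz *ᵥ w) :=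
    dotProduct_mulVec_eq_mul_of_mul_mulVec_eq_smul hτ2 hew ▸ hpos.dotProduct_mulVec_pos hw
  rcases (RCLike.ofReal_mul_pos_iff lam _).mp hsign with ⟨hlam, hs⟩ | ⟨hlam, hs⟩
  · obtain ⟨hre, him⟩ := Complex.neg_iff.mp hs
    exact ⟨him, fun h ↦ absurd h hlam.not_gt, fun _ ↦ hre⟩
  · obtain ⟨hre, him⟩ := Complex.pos_iff.mp hs
    exact ⟨him.symm, fun _ ↦ hre, fun h ↦ absurd h hlam.not_gt⟩
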